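/- arXiv:1607.07380 — 6 statements merged into one kernel-verified Lean document; each statement's English description precedes it below -/
import Mathlib

section
/- Let $R$ and $S$ be commutative algebras over a field $k$, let $I \subseteq R$ and $J \subseteq S$ be ideals, and let $T = R \otimes_k S$. Identifying $I$ and $J$ with their extensions to $T$, one has $I \cap J = IJ$ in $T$. -/
open TensorProduct

/-- Let `R` and `S` be commutative algebras over a field `k`, `I ⊆ R` and `J ⊆ S` ideals, and
`T = R ⊗[k] S`. Identifying `I` and `J` with their extensions to `T`, one has `I ∩ J = I * J`
in `T`. -/
theorem inf_eq_mul_of_extended_ideals {k R S : Type*} [Field k] [CommRing R] [CommRing S]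
    [Algebra k R] [Algebra k S] (I : Ideal R) (J : Ideal S) :
    (I.map (algebraMap R (R ⊗[k] S))) ⊓
        (J.map ((Algebra.TensorProduct.includeRight : S →ₐ[k] R ⊗[k] S) : S →+* R ⊗[k] S)) =
      (I.map (algebraMap R (R ⊗[k] S))) *
        (J.map ((Algebra.TensorProduct.includeRight : S →ₐ[k] R ⊗[k] S) : S →+* R ⊗[k] S)) := by
  have halg : (algebraMap R (R ⊗[k] S)) =
      ((Algebra.TensorProduct.includeLeft : R →ₐ[k] R ⊗[k] S) : R →+* R ⊗[k] S) := rfl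
  refine le_antisymm ?_ Ideal.mul_le_inf
  rintro x ⟨hx1, hx2⟩
  -- turn ideal memberships into tensor range memberships
  rw [halg] at hx1
  have h1 : x ∈ ((I.map (Algebra.TensorProduct.includeLeft :
      R →ₐ[k] R ⊗[k] S)).restrictScalars k) := hx1
  have h2 : x ∈ ((J.map (Algebra.TensorProduct.includeRight :
      S →ₐ[k] R ⊗[k] S)).restrictScalars k) := hx2
  rw [Ideal.map_includeLeft_eq] at h1
  rw [Ideal.map_includeRight_eq] at h2
  set ιI := Submodule.subtype (I.restrictScalars k)
  set ιJ := Submodule.subtype (J.restrictScalars k)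
  obtain ⟨a, ha⟩ := h1
  obtain ⟨b, hb⟩ := h2
  obtain ⟨f, hf⟩ := ιI.exists_leftInverse_of_injective (Submodule.ker_subtype _)
  obtain ⟨g, hg⟩ := ιJ.exists_leftInverse_of_injective (Submodule.ker_subtype _)
  have key1 : LinearMap.rTensor S (ιI ∘ₗ f) x = x := by
    rw [← ha, ← LinearMap.comp_apply, ← LinearMap.rTensor_comp, LinearMap.comp_assoc, hf,
      LinearMap.comp_id]
  have key2 : LinearMap.lTensor R (ιJ ∘ₗ g) x = x := by
    rw [← hb, ← LinearMap.comp_apply, ← LinearMap.lTensor_comp, LinearMap.comp_assoc, hg,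
      LinearMap.comp_id]
  have key : TensorProduct.map ιI ιJ ((TensorProduct.map f g) x) = x := by
    calc TensorProduct.map ιI ιJ ((TensorProduct.map f g) x)
        = TensorProduct.map (ιI ∘ₗ f) (ιJ ∘ₗ g) x := by
          rw [← LinearMap.comp_apply, ← TensorProduct.map_comp]
      _ = LinearMap.rTensor S (ιI ∘ₗ f) (LinearMap.lTensor R (ιJ ∘ₗ g) x) := by
          rw [← LinearMap.comp_apply, LinearMap.rTensor_comp_lTensor]
      _ = x := by rw [key2, key1]
  rw [← key]
  generalize (TensorProduct.map f g) x = c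
  induction c with
  | zero => simp
  | tmul i j =>
      have : TensorProduct.map ιI ιJ (i ⊗ₜ[k] j) = (i : R) ⊗ₜ[k] (j : S) := rfl
      rw [this]
      have hij : (i : R) ⊗ₜ[k] (j : S) =
          (algebraMap R (R ⊗[k] S) (i : R)) *
          ((Algebra.TensorProduct.includeRight : S →ₐ[k] R ⊗[k] S) (j : S)) := by
        simp [Algebra.TensorProduct.algebraMap_apply, Algebra.TensorProduct.tmul_mul_tmul]
      rw [hij]
      exact Ideal.mul_mem_mul (Ideal.mem_map_of_mem _ i.2) (Ideal.mem_map_of_mem _ j.2)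
  | add u v hu hv =>
      rw [map_add]
      exact Ideal.add_mem _ hu hv
end

section
/- Let $R$ and $S$ be commutative algebras over a field $k$, $I \subseteq R$ and $J \subseteq S$ ideals, $T = R \otimes_k S$, and $P = I + J$ (extensions to $T$). Then for all non-negative integers $p, q, r, s$ one has $I^{p+r}J^q \cap I^r J^{s+q} = I^{p+r}P^q \cap I^r J^{s+q} = I^{p+r}J^{s+q}$ as ideals of $T$. -/
/-!
Over a field every subspace has a linear retraction, so the projections `R → I` and `S → J`
tensor to idempotent endomorphisms of `R ⊗[k] S` that fix the extensions of `I` and of `J`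
respectively; an element of both extensions is fixed by their composite, whose image lies in
the product of the extensions. Hence `I^m ⊓ J^n = I^m J^n` in `R ⊗[k] S`, and both equalities
follow by squeezing between `I^(p+r) J^(s+q)` and this intersection.
-/

open TensorProduct Algebra.TensorProduct

namespace Ideal

theorem map_subtype_mem_map_includeLeft_mul_map_includeRight {k R S : Type*} [CommSemiring k]
    [CommSemiring R] [CommSemiring S] [Algebra k R] [Algebra k S] (A : Ideal R) (B : Ideal S)
    (y : A.restrictScalars k ⊗[k] B.restrictScalars k) :
    TensorProduct.map (A.restrictScalars k).subtype (B.restrictScalars k).subtype y ∈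
      A.map (includeLeft : R →ₐ[k] R ⊗[k] S) * B.map (includeRight : S →ₐ[k] R ⊗[k] S) := by
  induction y using TensorProduct.induction_on with
  | zero => simp
  | tmul a b =>
    have hab : (a : R) ⊗ₜ[k] (b : S) = includeLeft (S := k) (a : R) * includeRight (b : S) := by
      simp [tmul_mul_tmul]
    rw [TensorProduct.map_tmul, Submodule.subtype_apply, Submodule.subtype_apply, hab]
    exact mul_mem_mul (mem_map_of_mem _ a.2) (mem_map_of_mem _ b.2)
  | add y z hy hz => rw [map_add]; exact add_mem hy hz

theorem map_includeLeft_inf_map_includeRight_le_mul {k R S : Type*} [Field k]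
    [CommRing R] [CommRing S] [Algebra k R] [Algebra k S] (A : Ideal R) (B : Ideal S) :
    A.map (includeLeft : R →ₐ[k] R ⊗[k] S) ⊓ B.map (includeRight : S →ₐ[k] R ⊗[k] S) ≤
      A.map (includeLeft : R →ₐ[k] R ⊗[k] S) * B.map (includeRight : S →ₐ[k] R ⊗[k] S) := by
  set ιA := (A.restrictScalars k).subtype
  set ιB := (B.restrictScalars k).subtype
  obtain ⟨π, hπ⟩ := ιA.exists_leftInverse_of_injective (Submodule.ker_subtype _)
  obtain ⟨σ, hσ⟩ := ιB.exists_leftInverse_of_injective (Submodule.ker_subtype _)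
  rintro x ⟨hxA, hxB⟩
  have hx_fixA : (ιA ∘ₗ π).rTensor S x = x := by
    obtain ⟨y, rfl⟩ := (map_includeLeft_eq A).le hxA
    rw [← LinearMap.rTensor_comp_apply, LinearMap.comp_assoc, hπ, LinearMap.comp_id]
  have hx_fixB : (ιB ∘ₗ σ).lTensor R x = x := by
    obtain ⟨y, rfl⟩ := (map_includeRight_eq B).le hxB
    rw [← LinearMap.lTensor_comp_apply, LinearMap.comp_assoc, hσ, LinearMap.comp_id]
  have hx : x = TensorProduct.map ιA ιB (TensorProduct.map π σ x) := by
    calc x = (ιA ∘ₗ π).rTensor S ((ιB ∘ₗ σ).lTensor R x) := by rw [hx_fixB, hx_fixA]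
      _ = TensorProduct.map ιA ιB (TensorProduct.map π σ x) := by
        rw [← LinearMap.comp_apply, LinearMap.rTensor_comp_lTensor, ← LinearMap.comp_apply,
          ← TensorProduct.map_comp]
  rw [hx]
  exact map_subtype_mem_map_includeLeft_mul_map_includeRight A B _

end Ideal

/-- Let `R` and `S` be commutative algebras over a field `k`, `I ⊆ R` and `J ⊆ S` ideals,
`T = R ⊗[k] S`, and `P = I + J` (extensions to `T`).  Then for all `p q r s : ℕ`,
`I^(p+r) J^q ⊓ I^r J^(s+q) = I^(p+r) P^q ⊓ I^r J^(s+q) = I^(p+r) J^(s+q)` as ideals of `T`. -/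
theorem power_products_inf_eq {k R S : Type*} [Field k] [CommRing R] [CommRing S]
    [Algebra k R] [Algebra k S] (I : Ideal R) (J : Ideal S)
    (I' J' P : Ideal (R ⊗[k] S))
    (hI' : I' = I.map (algebraMap R (R ⊗[k] S)))
    (hJ' : J' = J.map ((Algebra.TensorProduct.includeRight : S →ₐ[k] R ⊗[k] S) : S →+* R ⊗[k] S))
    (hP : P = I' + J') (p q r s : ℕ) :
    I' ^ (p + r) * J' ^ q ⊓ I' ^ r * J' ^ (s + q) = I' ^ (p + r) * P ^ q ⊓ I' ^ r * J' ^ (s + q)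
      ∧ I' ^ (p + r) * P ^ q ⊓ I' ^ r * J' ^ (s + q) = I' ^ (p + r) * J' ^ (s + q) := by
  have key : I' ^ (p + r) ⊓ J' ^ (s + q) ≤ I' ^ (p + r) * J' ^ (s + q) := by
    rw [hI', hJ', ← Ideal.map_pow, ← Ideal.map_pow]
    exact Ideal.map_includeLeft_inf_map_includeRight_le_mul _ _
  have lower : I' ^ (p + r) * J' ^ (s + q) ≤ I' ^ (p + r) * J' ^ q ⊓ I' ^ r * J' ^ (s + q) :=
    le_inf (Ideal.mul_mono_right (Ideal.pow_le_pow_right (Nat.le_add_left q s)))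
      (Ideal.mul_mono_left (Ideal.pow_le_pow_right (Nat.le_add_left r p)))
  have mono : I' ^ (p + r) * J' ^ q ⊓ I' ^ r * J' ^ (s + q) ≤
      I' ^ (p + r) * P ^ q ⊓ I' ^ r * J' ^ (s + q) :=
    inf_le_inf_right _ (Ideal.mul_mono_right (Ideal.pow_right_mono (hP ▸ le_sup_right) q))
  have upper : I' ^ (p + r) * P ^ q ⊓ I' ^ r * J' ^ (s + q) ≤ I' ^ (p + r) * J' ^ (s + q) :=
    (inf_le_inf Ideal.mul_le_left Ideal.mul_le_right).trans key
  exact ⟨le_antisymm mono (upper.trans lower), le_antisymm upper (lower.trans mono)⟩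
end

section
/- Let $R$ and $S$ be commutative algebras over a field $k$, $I \subseteq R$ and $J \subseteq S$ ideals, $T = R \otimes_k S$, $P = I + J$. For all $r \ge 0$, $s \ge 0$ and $0 \le i \le s$, the intersection of $I^{r+i}J^{s-i}$ with the ideal $\sum_{0 \le j \le s, j \ne i} I^{r+j}J^{s-j} + I^r P^{s+1}$ is contained in $I^r P^{s+1}$. -/
/-!
Put `a = r + i` and `b = s - i`. Every summand `I^(r+j) J^(s-j)` with `j ≠ i`, as well as
`I^r P^(s+1)`, lies in `I^(a+1) T + J^(b+1) T`, the kernel of `T → R/I^(a+1) ⊗ S/J^(b+1)`.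
Over a field every module is flat, so an element of `I^a ⊗ J^b` in that kernel already lies in
`I^(a+1) ⊗ J^b + I^a ⊗ J^(b+1)`, and both of these products are contained in `I^r P^(s+1)`.
-/

open TensorProduct

namespace Ideal

variable {Q : Type*} [CommSemiring Q] (I J : Ideal Q)

theorem sup_pow_le_pow_sup_pow_of_add_le {m n N : ℕ} (h : m + n ≤ N + 1) :
    (I ⊔ J) ^ N ≤ I ^ m ⊔ J ^ n := by
  rw [← add_eq_sup, add_pow, sum_eq_sup]
  refine Finset.sup_le fun t ht => ?_
  rw [Finset.mem_range] at ht
  by_cases hm : m ≤ t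
  · exact mul_le_left.trans (mul_le_left.trans ((pow_le_pow_right hm).trans le_sup_left))
  · exact mul_le_left.trans
      (mul_le_right.trans ((pow_le_pow_right (by omega)).trans le_sup_right))

theorem pow_add_mul_pow_le_pow_mul_sup_pow (r m n : ℕ) :
    I ^ (r + m) * J ^ n ≤ I ^ r * (I ⊔ J) ^ (m + n) := by
  rw [pow_add, mul_assoc, pow_add]
  exact mul_mono_right (mul_mono (pow_right_mono le_sup_left _) (pow_right_mono le_sup_right _))

theorem sum_erase_pow_mul_pow_le {r s i : ℕ} (hi : i ≤ s) :
    ∑ j ∈ (Finset.range (s + 1)).erase i, I ^ (r + j) * J ^ (s - j) ≤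
      I ^ (r + i + 1) ⊔ J ^ (s - i + 1) := by
  rw [sum_eq_sup]
  refine Finset.sup_le fun j hj => ?_
  rw [Finset.mem_erase, Finset.mem_range] at hj
  rcases lt_or_gt_of_ne hj.1 with hji | hij
  · exact mul_le_right.trans
      ((pow_le_pow_right (show s - i + 1 ≤ s - j by omega)).trans le_sup_right)
  · exact mul_le_left.trans
      ((pow_le_pow_right (show r + i + 1 ≤ r + j by omega)).trans le_sup_left)

theorem pow_mul_sup_pow_le {r s i : ℕ} (hi : i ≤ s) :
    I ^ r * (I ⊔ J) ^ (s + 1) ≤ I ^ (r + i + 1) ⊔ J ^ (s - i + 1) :=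
  calc I ^ r * (I ⊔ J) ^ (s + 1)
      ≤ I ^ r * (I ^ (i + 1) ⊔ J ^ (s - i + 1)) :=
        mul_mono_right (sup_pow_le_pow_sup_pow_of_add_le I J (by omega))
    _ = I ^ (r + i + 1) ⊔ I ^ r * J ^ (s - i + 1) := by rw [mul_sup, ← pow_add, add_assoc]
    _ ≤ I ^ (r + i + 1) ⊔ J ^ (s - i + 1) := sup_le_sup_left mul_le_right _

end Ideal

namespace TensorProduct

open LinearMap

section Field

variable {k : Type*} [Field k] {V W V' W' : Type*}
  [AddCommGroup V] [Module k V] [AddCommGroup W] [Module k W]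
  [AddCommGroup V'] [Module k V'] [AddCommGroup W'] [Module k W']

theorem ker_map_eq_sup (f : V →ₗ[k] V') (g : W →ₗ[k] W') :
    ker (map f g) = range (lTensor V (ker g).subtype) ⊔ range (rTensor W (ker f).subtype) := by
  let f' := (ker f).liftQ f le_rfl
  let g' := (ker g).liftQ g le_rfl
  have hf' : Function.Injective f' := by
    rw [← ker_eq_bot]; exact Submodule.ker_liftQ_eq_bot _ _ _ le_rfl
  have hg' : Function.Injective g' := by
    rw [← ker_eq_bot]; exact Submodule.ker_liftQ_eq_bot _ _ _ le_rfl
  have hinj : Function.Injective (map f' g') := by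
    rw [← lTensor_comp_rTensor]
    exact (Module.Flat.lTensor_preserves_injective_linearMap g' hg').comp
      (Module.Flat.rTensor_preserves_injective_linearMap f' hf')
  have hfac : map f g = map f' g' ∘ₗ map (ker f).mkQ (ker g).mkQ := by
    rw [← map_comp, Submodule.liftQ_mkQ, Submodule.liftQ_mkQ]
  rw [hfac, ker_comp_of_ker_eq_bot _ (ker_eq_bot.2 hinj)]
  exact TensorProduct.map_ker (exact_subtype_mkQ _) (Submodule.mkQ_surjective _)
    (exact_subtype_mkQ _) (Submodule.mkQ_surjective _)

theorem range_mapIncl_inf_ker_map_le (M : Submodule k V) (N : Submodule k W)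
    (f : V →ₗ[k] V') (g : W →ₗ[k] W') :
    range (mapIncl M N) ⊓ ker (map f g) ≤
      range (mapIncl (ker f ⊓ M) N) ⊔ range (mapIncl M (ker g ⊓ N)) := by
  rintro _ ⟨⟨t, rfl⟩, ht⟩
  have ht' : t ∈ ker (map (f ∘ₗ M.subtype) (g ∘ₗ N.subtype)) := by
    rwa [map_comp, mem_ker, comp_apply]
  rw [ker_map_eq_sup] at ht'
  obtain ⟨u, ⟨u, rfl⟩, v, ⟨v, rfl⟩, rfl⟩ := Submodule.mem_sup.1 ht'
  rw [map_add, sup_comm]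
  refine Submodule.add_mem_sup ?_ ?_
  · rw [mapIncl, ← comp_apply, map_comp_lTensor]
    refine range_map_mono le_rfl ?_ (mem_range_self _ u)
    rintro _ ⟨⟨w, hw⟩, rfl⟩
    exact ⟨⟨w, mem_ker.1 hw, w.2⟩, rfl⟩
  · rw [mapIncl, ← comp_apply, map_comp_rTensor]
    refine range_map_mono ?_ le_rfl (mem_range_self _ v)
    rintro _ ⟨⟨w, hw⟩, rfl⟩
    exact ⟨⟨w, mem_ker.1 hw, w.2⟩, rfl⟩

end Field

theorem mul_mem_range_mapIncl {k R S : Type*} [CommSemiring k] [CommRing R] [CommRing S]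
    [Algebra k R] [Algebra k S] (A : Ideal R) (B : Ideal S) (t : R ⊗[k] S)
    {z : R ⊗[k] S} (hz : z ∈ range (mapIncl (A.restrictScalars k) (B.restrictScalars k))) :
    t * z ∈ range (mapIncl (A.restrictScalars k) (B.restrictScalars k)) := by
  induction t using TensorProduct.induction_on with
  | zero => rw [zero_mul]; exact zero_mem _
  | add t₁ t₂ h₁ h₂ => rw [add_mul]; exact add_mem h₁ h₂
  | tmul a b =>
    have hmul : mulLeft k (a ⊗ₜ[k] b) = map (mulLeft k a) (mulLeft k b) :=
      TensorProduct.ext' fun _ _ => Algebra.TensorProduct.tmul_mul_tmul _ _ _ _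
    obtain ⟨w, rfl⟩ := hz
    rw [← mulLeft_apply (R := k), hmul, mapIncl, ← comp_apply, ← map_comp]
    refine range_map_mono ?_ ?_ (mem_range_self _ w) <;>
      rintro _ ⟨⟨c, hc⟩, rfl⟩
    · exact ⟨⟨a * c, A.mul_mem_left a hc⟩, rfl⟩
    · exact ⟨⟨b * c, B.mul_mem_left b hc⟩, rfl⟩

end TensorProduct

theorem Ideal.Quotient.ker_toLinearMap_mkₐ {k R : Type*} [CommSemiring k] [CommRing R]
    [Algebra k R] (A : Ideal R) :
    LinearMap.ker (Ideal.Quotient.mkₐ k A).toLinearMap = A.restrictScalars k := by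
  ext; simp [Ideal.Quotient.eq_zero_iff_mem]

namespace Algebra.TensorProduct

open LinearMap

variable {k R S : Type*} [CommRing R] [CommRing S]

local notation "ιR" => algebraMap R (R ⊗[k] S)
local notation "ιS" => ((includeRight : S →ₐ[k] R ⊗[k] S) : S →+* R ⊗[k] S)

section CommSemiring

variable [CommSemiring k] [Algebra k R] [Algebra k S]

theorem restrictScalars_map_mul_map (A : Ideal R) (B : Ideal S) :
    (A.map ιR * B.map ιS).restrictScalars k =
      range (mapIncl (A.restrictScalars k) (B.restrictScalars k)) := by
  have htmul (a : R) (b : S) : a ⊗ₜ[k] b = ιR a * ιS b := by simp [tmul_mul_tmul]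
  apply le_antisymm
  · let K : Ideal (R ⊗[k] S) :=
      { (range (mapIncl (A.restrictScalars k) (B.restrictScalars k))).toAddSubmonoid with
        smul_mem' := mul_mem_range_mapIncl A B }
    suffices h : A.map ιR * B.map ιS ≤ K from fun x hx => h hx
    rw [Ideal.map, Ideal.map, Ideal.span_mul_span', Ideal.span_le]
    rintro _ ⟨_, ⟨a, ha, rfl⟩, _, ⟨b, hb, rfl⟩, rfl⟩
    exact ⟨⟨a, ha⟩ ⊗ₜ ⟨b, hb⟩, htmul a b⟩
  · rw [range_mapIncl, Submodule.map₂_eq_span_image2, Submodule.span_le]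
    rintro _ ⟨a, ha, b, hb, rfl⟩
    change a ⊗ₜ[k] b ∈ Submodule.restrictScalars k _
    rw [Submodule.restrictScalars_mem, htmul]
    exact Ideal.mul_mem_mul (Ideal.mem_map_of_mem _ ha) (Ideal.mem_map_of_mem _ hb)

end CommSemiring

variable [Field k] [Algebra k R] [Algebra k S]

theorem map_mul_map_inf_map_sup_map_le {A A' : Ideal R} {B B' : Ideal S}
    (hA : A' ≤ A) (hB : B' ≤ B) :
    A.map ιR * B.map ιS ⊓ (A'.map ιR ⊔ B'.map ιS) ≤
      A'.map ιR * B.map ιS ⊔ A.map ιR * B'.map ιS := by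
  let q₁ := Ideal.Quotient.mkₐ k A'
  let q₂ := Ideal.Quotient.mkₐ k B'
  have hker : A'.map ιR ⊔ B'.map ιS = RingHom.ker (map q₁ q₂) := by
    rw [map_ker _ _ (Ideal.Quotient.mkₐ_surjective k A') (Ideal.Quotient.mkₐ_surjective k B'),
      ← RingHom.ker_coe_toRingHom, Ideal.Quotient.mkₐ_ker,
      ← RingHom.ker_coe_toRingHom, Ideal.Quotient.mkₐ_ker]
    rfl
  have key := range_mapIncl_inf_ker_map_le (A.restrictScalars k) (B.restrictScalars k)
    q₁.toLinearMap q₂.toLinearMap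
  rw [Ideal.Quotient.ker_toLinearMap_mkₐ, Ideal.Quotient.ker_toLinearMap_mkₐ,
    inf_eq_left.2 (show A'.restrictScalars k ≤ A.restrictScalars k from hA),
    inf_eq_left.2 (show B'.restrictScalars k ≤ B.restrictScalars k from hB),
    ← restrictScalars_map_mul_map, ← restrictScalars_map_mul_map,
    ← restrictScalars_map_mul_map, ← Submodule.restrictScalars_sup] at key
  rintro x ⟨hx, hx'⟩
  rw [SetLike.mem_coe, hker] at hx'
  exact key ⟨hx, hx'⟩

end Algebra.TensorProduct

/-- With `T = R ⊗[k] S`, `P = I + J`, for all `r ≥ 0`, `s ≥ 0` and `0 ≤ i ≤ s`, the intersection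
of `I^(r+i) J^(s-i)` with `∑_{0 ≤ j ≤ s, j ≠ i} I^(r+j) J^(s-j) + I^r P^(s+1)` is contained in
`I^r P^(s+1)`. -/
theorem inter_summand_subset {k R S : Type*} [Field k] [CommRing R] [CommRing S]
    [Algebra k R] [Algebra k S] (I : Ideal R) (J : Ideal S)
    (I' J' P : Ideal (R ⊗[k] S))
    (hI' : I' = I.map (algebraMap R (R ⊗[k] S)))
    (hJ' : J' = J.map ((Algebra.TensorProduct.includeRight : S →ₐ[k] R ⊗[k] S) : S →+* R ⊗[k] S))
    (hP : P = I' + J') (r s i : ℕ) (hi : i ≤ s) :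
    I' ^ (r + i) * J' ^ (s - i) ⊓
        ((∑ j ∈ (Finset.range (s + 1)).erase i, I' ^ (r + j) * J' ^ (s - j))
          + I' ^ r * P ^ (s + 1))
      ≤ I' ^ r * P ^ (s + 1) := by
  rw [hP, Ideal.add_eq_sup, Ideal.add_eq_sup]
  calc _ ≤ I' ^ (r + i) * J' ^ (s - i) ⊓ (I' ^ (r + i + 1) ⊔ J' ^ (s - i + 1)) :=
        inf_le_inf_left _ (sup_le (Ideal.sum_erase_pow_mul_pow_le I' J' hi)
          (Ideal.pow_mul_sup_pow_le I' J' hi))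
    _ ≤ I' ^ (r + i + 1) * J' ^ (s - i) ⊔ I' ^ (r + i) * J' ^ (s - i + 1) := by
        simp only [hI', hJ', ← Ideal.map_pow]
        exact Algebra.TensorProduct.map_mul_map_inf_map_sup_map_le
          (Ideal.pow_le_pow_right (Nat.le_succ _)) (Ideal.pow_le_pow_right (Nat.le_succ _))
    _ ≤ I' ^ r * (I' ⊔ J') ^ (s + 1) := by
        refine sup_le ?_ ?_
        · simpa only [add_assoc, show i + 1 + (s - i) = s + 1 by omega]
            using Ideal.pow_add_mul_pow_le_pow_mul_sup_pow I' J' r (i + 1) (s - i)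
        · simpa only [show i + (s - i + 1) = s + 1 by omega]
            using Ideal.pow_add_mul_pow_le_pow_mul_sup_pow I' J' r i (s - i + 1)
end

section
/- Let $R$ and $S$ be commutative algebras over a field $k$, $I \subseteq R$ and $J \subseteq S$ ideals, $T = R \otimes_k S$, $P = I + J$. Then for all $r, s \ge 0$ there is an isomorphism of $T$-modules $I^r P^s / I^r P^{s+1} \cong \bigoplus_{i=0}^s (I^{r+i}/I^{r+i+1}) \otimes_k (J^{s-i}/J^{s-i+1})$. -/
open TensorProduct DirectSum

section RightModule

variable (k : Type*) [CommRing k] (S : Type*) [CommRing S] [Algebra k S]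
variable (M N : Type*) [AddCommGroup M] [Module k M] [AddCommGroup N] [Module k N]
  [Module S N] [IsScalarTower k S N]

/-- The action of `S` on `M ⊗[k] N` through the right factor, as a ring homomorphism to
endomorphisms. -/
noncomputable def rightSMulRingHom : S →+* Module.End k (M ⊗[k] N) where
  toFun s := (Module.toModuleEnd k N s).lTensor M
  map_zero' := by
    show (Module.toModuleEnd k N (0 : S)).lTensor M = 0
    rw [map_zero, LinearMap.lTensor_zero]
  map_one' := by
    show (Module.toModuleEnd k N (1 : S)).lTensor M = 1
    rw [map_one, Module.End.one_eq_id, LinearMap.lTensor_id, Module.End.one_eq_id]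
  map_add' s t := by
    show (Module.toModuleEnd k N (s + t)).lTensor M
      = (Module.toModuleEnd k N s).lTensor M + (Module.toModuleEnd k N t).lTensor M
    rw [map_add, LinearMap.lTensor_add]
  map_mul' s t := by
    show (Module.toModuleEnd k N (s * t)).lTensor M
      = (Module.toModuleEnd k N s).lTensor M * (Module.toModuleEnd k N t).lTensor M
    rw [map_mul, Module.End.mul_eq_comp, LinearMap.lTensor_comp, Module.End.mul_eq_comp]

/-- `M ⊗[k] N` as a module over `S`, acting through the right tensor factor. -/
noncomputable def rightModule : Module S (M ⊗[k] N) :=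
  Module.compHom (M ⊗[k] N) (rightSMulRingHom k S M N)

variable (R : Type*) [CommRing R] [Algebra k R] [Module R M] [IsScalarTower k R M]

/-- The `R ⊗[k] S`-module structure on `M ⊗[k] N`, with `R` acting through the left factor
and `S` through the right factor. -/
noncomputable def mixedModule : Module (R ⊗[k] S) (M ⊗[k] N) := by
  letI := rightModule k S M N
  have hsm : ∀ (s : S) (m : M) (n : N), s • (m ⊗ₜ[k] n) = m ⊗ₜ[k] (s • n) := fun _ _ _ => rfl
  letI : IsScalarTower k S (M ⊗[k] N) := by
    constructor
    intro c s x
    induction x using TensorProduct.induction_on with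
    | zero => rw [smul_zero, smul_zero, smul_zero]
    | tmul m n => rw [hsm, hsm, smul_assoc, TensorProduct.tmul_smul]
    | add x y hx hy => rw [smul_add, smul_add, hx, hy, smul_add]
  letI : SMulCommClass R S (M ⊗[k] N) := by
    constructor
    intro r s x
    induction x using TensorProduct.induction_on with
    | zero => rw [smul_zero, smul_zero, smul_zero]
    | tmul m n =>
        rw [hsm, TensorProduct.smul_tmul', TensorProduct.smul_tmul', hsm]
    | add x y hx hy => rw [smul_add, smul_add, hx, hy, smul_add, smul_add]
  exact TensorProduct.Algebra.module

end RightModule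

/-!
Over the field `k` choose `k`-linear retractions `R → I ^ a` and `S → J ^ b`; composed with the
quotient maps and tensored, they give `k`-linear projections
`R ⊗[k] S → (I ^ a / I ^ (a + 1)) ⊗[k] (J ^ b / J ^ (b + 1))`.
Expanding `P ^ n` binomially shows that `I ^ r P ^ n` is the `k`-span of the tensors `x ⊗ y` with
`x ∈ I ^ (r + i)`, `y ∈ J ^ (n - i)`, `i ≤ n`. Hence `x̄ ⊗ ȳ ↦ [x ⊗ y]` is a well-defined, surjective,
`R ⊗[k] S`-linear map from the direct sum onto `I ^ r P ^ s / I ^ r P ^ (s + 1)`, and the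
projections, which kill `I ^ r P ^ (s + 1)`, assemble to a left inverse of it.
-/

theorem Ideal.sup_pow_eq_iSup_pow_mul_pow {A : Type*} [CommSemiring A] (I J : Ideal A) (n : ℕ) :
    (I ⊔ J) ^ n = ⨆ i ∈ Finset.range (n + 1), I ^ i * J ^ (n - i) := by
  have hcast : ∀ {m : ℕ}, m ≠ 0 → (m : Ideal A) = 1 := fun hm => by
    rw [← nsmul_one, nsmul_eq_self hm]
  rw [← Ideal.add_eq_sup, add_pow, Ideal.sum_eq_sup, Finset.sup_eq_iSup]
  refine iSup_congr fun i => iSup_congr fun hi => ?_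
  rw [hcast (Nat.choose_pos (Nat.lt_succ_iff.mp (Finset.mem_range.mp hi))).ne', mul_one]

theorem Submodule.map₂_mk_mul_map₂_mk {k A B : Type*} [CommSemiring k] [Semiring A] [Semiring B]
    [Algebra k A] [Algebra k B] (M M' : Submodule k A) (N N' : Submodule k B) :
    map₂ (TensorProduct.mk k A B) M N * map₂ (TensorProduct.mk k A B) M' N'
      = map₂ (TensorProduct.mk k A B) (M * M') (N * N') := by
  rw [map₂_eq_span_image2, map₂_eq_span_image2, span_mul_span, mul_eq_span_mul_set M,
    mul_eq_span_mul_set N, map₂_span_span]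
  congr 1
  ext z
  simp only [Set.mem_mul, Set.mem_image2, SetLike.mem_coe, TensorProduct.mk_apply]
  constructor
  · rintro ⟨_, ⟨m, hm, n, hn, rfl⟩, _, ⟨m', hm', n', hn', rfl⟩, rfl⟩
    exact ⟨_, ⟨m, hm, m', hm', rfl⟩, _, ⟨n, hn, n', hn', rfl⟩,
      (Algebra.TensorProduct.tmul_mul_tmul _ _ _ _).symm⟩
  · rintro ⟨_, ⟨m, hm, m', hm', rfl⟩, _, ⟨n, hn, n', hn', rfl⟩, rfl⟩
    exact ⟨_, ⟨m, hm, n, hn, rfl⟩, _, ⟨m', hm', n', hn', rfl⟩,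
      Algebra.TensorProduct.tmul_mul_tmul _ _ _ _⟩

open Algebra.TensorProduct in
theorem Ideal.restrictScalars_map_includeLeft_mul_map_includeRight {k R S : Type*} [CommRing k]
    [CommRing R] [CommRing S] [Algebra k R] [Algebra k S] (A : Ideal R) (B : Ideal S) :
    (A.map (includeLeft : R →ₐ[k] R ⊗[k] S) *
        B.map (includeRight : S →ₐ[k] R ⊗[k] S)).restrictScalars k
      = Submodule.map₂ (TensorProduct.mk k R S) (A.restrictScalars k) (B.restrictScalars k) := by
  apply le_antisymm
  · rw [Submodule.restrictScalars_mul, Ideal.map_includeLeft_eq,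
      Ideal.map_includeRight_eq (R := k), LinearMap.rTensor, LinearMap.lTensor,
      TensorProduct.range_map, TensorProduct.range_map, Submodule.range_subtype,
      Submodule.range_subtype, LinearMap.range_id, LinearMap.range_id,
      Submodule.map₂_mk_mul_map₂_mk]
    exact Submodule.map₂_le_map₂ (Submodule.mul_le.mpr fun a ha t _ => A.mul_mem_right t ha)
      (Submodule.mul_le.mpr fun t _ b hb => B.mul_mem_left t hb)
  · refine Submodule.map₂_le.mpr fun x hx y hy => ?_
    have hxy : x ⊗ₜ[k] y =
        (includeLeft : R →ₐ[k] R ⊗[k] S) x * (includeRight : S →ₐ[k] R ⊗[k] S) y := by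
      simp
    rw [TensorProduct.mk_apply, hxy]
    exact Ideal.mul_mem_mul (Ideal.mem_map_of_mem _ hx) (Ideal.mem_map_of_mem _ hy)

section MixedModule

variable {k R S M N Q : Type*} [CommRing k] [CommRing R] [CommRing S] [Algebra k R] [Algebra k S]
  [AddCommGroup M] [Module k M] [Module R M] [IsScalarTower k R M]
  [AddCommGroup N] [Module k N] [Module S N] [IsScalarTower k S N]
  [AddCommGroup Q] [Module (R ⊗[k] S) Q]

theorem mixedModule_smul_tmul (a : R) (b : S) (x : M) (y : N) :
    letI := mixedModule k S M N R
    (a ⊗ₜ[k] b) • (x ⊗ₜ[k] y) = (a • x) ⊗ₜ[k] (b • y) := rfl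

theorem mixedModule_map_smul (f : M ⊗[k] N →+ Q)
    (hf : ∀ (a : R) (b : S) (x : M) (y : N),
      f ((a • x) ⊗ₜ[k] (b • y)) = (a ⊗ₜ[k] b) • f (x ⊗ₜ[k] y))
    (t : R ⊗[k] S) (z : M ⊗[k] N) :
    letI := mixedModule k S M N R
    f (t • z) = t • f z := by
  let _ := mixedModule k S M N R
  induction t using TensorProduct.induction_on with
  | zero => rw [zero_smul, map_zero, zero_smul]
  | add t t' ht ht' => rw [add_smul, map_add, ht, ht', add_smul]
  | tmul a b =>
    induction z using TensorProduct.induction_on with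
    | zero => rw [smul_zero, map_zero, smul_zero]
    | tmul x y => rw [mixedModule_smul_tmul, hf]
    | add z z' hz hz' => rw [smul_add, map_add, hz, hz', map_add, smul_add]

variable [Module k Q]

noncomputable def quotTensorQuotLift (p : Submodule R M) (q : Submodule S N)
    (f : M →ₗ[k] N →ₗ[k] Q) (hp : ∀ x ∈ p, f x = 0) (hq : ∀ y ∈ q, f.flip y = 0)
    (hf : ∀ (a : R) (b : S) (x : M) (y : N), f (a • x) (b • y) = (a ⊗ₜ[k] b) • f x y) :
    letI := mixedModule k S (M ⧸ p) (N ⧸ q) R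
    (M ⧸ p) ⊗[k] (N ⧸ q) →ₗ[R ⊗[k] S] Q :=
  letI := mixedModule k S (M ⧸ p) (N ⧸ q) R
  let g : (M ⧸ p) ⊗[k] (N ⧸ q) →ₗ[k] Q :=
    TensorProduct.lift (f.liftQ₂ (p.restrictScalars k) (q.restrictScalars k) hp hq) ∘ₗ
      TensorProduct.map (Submodule.Quotient.restrictScalarsEquiv k p).symm.toLinearMap
        (Submodule.Quotient.restrictScalarsEquiv k q).symm.toLinearMap
  { toFun := g
    map_add' := g.map_add
    map_smul' := mixedModule_map_smul g.toAddMonoidHom fun a b x y => by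
      induction x using Submodule.Quotient.induction_on with | _ x => ?_
      induction y using Submodule.Quotient.induction_on with | _ y => ?_
      exact hf a b x y }

end MixedModule

section GradedPiece

variable {R : Type*} [CommRing R]

abbrev Ideal.GradedPiece (I : Ideal R) (n : ℕ) : Type _ :=
  ↥(I ^ n) ⧸ Submodule.comap (I ^ n).subtype (I ^ (n + 1))

variable (k : Type*) [Field k] [Algebra k R]

/-- Depends on the choice of a `k`-linear retraction `R → I ^ n`, which exists since `k` is a
field. -/
noncomputable def Ideal.gradedProj (I : Ideal R) (n : ℕ) : R →ₗ[k] I.GradedPiece n :=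
  (Submodule.mkQ _).restrictScalars k ∘ₗ ((I ^ n).subtype.restrictScalars k).leftInverse

variable {k}

theorem Ideal.gradedProj_coe (I : Ideal R) (n : ℕ) (x : ↥(I ^ n)) :
    I.gradedProj k n x = Submodule.Quotient.mk x := by
  rw [Ideal.gradedProj, LinearMap.comp_apply, LinearMap.coe_restrictScalars,
    show (x : R) = (I ^ n).subtype.restrictScalars k x from rfl,
    LinearMap.leftInverse_apply_of_inj (LinearMap.ker_eq_bot.mpr Subtype.val_injective)]
  rfl

theorem Ideal.gradedProj_eq_zero {I : Ideal R} {n m : ℕ} (hnm : n < m) {x : R}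
    (hx : x ∈ I ^ m) : I.gradedProj k n x = 0 := by
  have hx' : x ∈ I ^ (n + 1) := Ideal.pow_le_pow_right hnm hx
  exact (I.gradedProj_coe n ⟨x, Ideal.pow_le_pow_right n.le_succ hx'⟩).trans
    ((Submodule.Quotient.mk_eq_zero _).mpr hx')

end GradedPiece

section TensorFiltration

variable (k : Type*) {R S : Type*} [CommRing k] [CommRing R] [CommRing S] [Algebra k R]
  [Algebra k S] (I : Ideal R) (J : Ideal S) (r s : ℕ)

open Algebra.TensorProduct

/-- The ideal `I ^ r P ^ n` of the statement, `P = I + J` being extended to `R ⊗[k] S`. -/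
abbrev Ideal.tensorFiltration (n : ℕ) : Ideal (R ⊗[k] S) :=
  I.map (includeLeft : R →ₐ[k] R ⊗[k] S) ^ r *
    (I.map (includeLeft : R →ₐ[k] R ⊗[k] S) ⊔ J.map (includeRight : S →ₐ[k] R ⊗[k] S)) ^ n

abbrev Ideal.tensorFiltrationQuot : Type _ :=
  ↥(I.tensorFiltration k J r s) ⧸
    Submodule.comap (I.tensorFiltration k J r s).subtype (I.tensorFiltration k J r (s + 1))

abbrev Ideal.GradedTensor : Type _ :=
  ⨁ i : Fin (s + 1), I.GradedPiece (r + i) ⊗[k] J.GradedPiece (s - i)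

variable {k I J r s}

theorem Ideal.restrictScalars_tensorFiltration (n : ℕ) :
    (I.tensorFiltration k J r n).restrictScalars k
      = ⨆ i ∈ Finset.range (n + 1), Submodule.map₂ (TensorProduct.mk k R S)
          ((I ^ (r + i)).restrictScalars k) ((J ^ (n - i)).restrictScalars k) := by
  simp_rw [Ideal.tensorFiltration, Ideal.sup_pow_eq_iSup_pow_mul_pow, Ideal.mul_iSup,
    Submodule.restrictScalars_iSup, ← mul_assoc, ← pow_add, ← Ideal.map_pow,
    Ideal.restrictScalars_map_includeLeft_mul_map_includeRight]

theorem Ideal.tmul_mem_tensorFiltration {n i : ℕ} (hi : i ≤ n) {x : R} (hx : x ∈ I ^ (r + i))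
    {y : S} (hy : y ∈ J ^ (n - i)) : x ⊗ₜ[k] y ∈ I.tensorFiltration k J r n := by
  have hle := le_iSup₂_of_le (f := fun i (_ : i ∈ Finset.range (n + 1)) =>
    Submodule.map₂ (TensorProduct.mk k R S) ((I ^ (r + i)).restrictScalars k)
      ((J ^ (n - i)).restrictScalars k)) i (Finset.mem_range_succ_iff.mpr hi) le_rfl
  rw [← Ideal.restrictScalars_tensorFiltration] at hle
  exact hle (Submodule.apply_mem_map₂ _ hx hy)

theorem Ideal.tensorFiltration_le {n : ℕ} {p : Submodule k (R ⊗[k] S)}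
    (h : ∀ i ≤ n, ∀ x ∈ I ^ (r + i), ∀ y ∈ J ^ (n - i), x ⊗ₜ[k] y ∈ p) :
    (I.tensorFiltration k J r n).restrictScalars k ≤ p := by
  rw [Ideal.restrictScalars_tensorFiltration]
  exact iSup₂_le fun i hi => Submodule.map₂_le.mpr fun x hx y hy =>
    h i (Finset.mem_range_succ_iff.mp hi) x hx y hy

variable (k I J r s)

noncomputable def Ideal.tmulToTensorFiltrationQuot (i : Fin (s + 1)) :
    ↥(I ^ (r + i)) →ₗ[k] ↥(J ^ (s - i)) →ₗ[k] I.tensorFiltrationQuot k J r s :=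
  LinearMap.mk₂ k (fun x y => Submodule.Quotient.mk ⟨(x : R) ⊗ₜ[k] (y : S),
      Ideal.tmul_mem_tensorFiltration (Nat.lt_succ_iff.mp i.2) x.2 y.2⟩)
    (fun _ _ _ => congrArg Submodule.Quotient.mk (Subtype.ext (TensorProduct.add_tmul _ _ _)))
    (fun _ _ _ => congrArg Submodule.Quotient.mk
      (Subtype.ext (TensorProduct.smul_tmul' _ _ _).symm))
    (fun _ _ _ => congrArg Submodule.Quotient.mk (Subtype.ext (TensorProduct.tmul_add _ _ _)))
    (fun _ _ _ => congrArg Submodule.Quotient.mk (Subtype.ext (TensorProduct.tmul_smul _ _ _)))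

noncomputable def Ideal.gradedTensorToQuot :
    letI := fun i : Fin (s + 1) =>
      mixedModule k S (I.GradedPiece (r + i)) (J.GradedPiece (s - i)) R
    I.GradedTensor k J r s →ₗ[R ⊗[k] S] I.tensorFiltrationQuot k J r s :=
  letI := fun i : Fin (s + 1) =>
    mixedModule k S (I.GradedPiece (r + i)) (J.GradedPiece (s - i)) R
  DirectSum.toModule _ _ _ fun i => quotTensorQuotLift _ _ (I.tmulToTensorFiltrationQuot k J r s i)
    (fun x hx => LinearMap.ext fun y => (Submodule.Quotient.mk_eq_zero _).mpr
      (Ideal.tmul_mem_tensorFiltration (i := i + 1) (by omega) (by rwa [← add_assoc])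
        (by rw [Nat.add_sub_add_right]; exact y.2)))
    (fun y hy => LinearMap.ext fun x => (Submodule.Quotient.mk_eq_zero _).mpr
      (Ideal.tmul_mem_tensorFiltration (i := i) (by omega) x.2
        (by rw [Nat.sub_add_comm (Nat.lt_succ_iff.mp i.2)]; exact hy)))
    (fun a b x y => congrArg Submodule.Quotient.mk
      (Subtype.ext (Algebra.TensorProduct.tmul_mul_tmul _ _ _ _).symm))

variable {k I J r s}

theorem Ideal.gradedTensorToQuot_of_mk_tmul_mk (i : Fin (s + 1)) (x : ↥(I ^ (r + i)))
    (y : ↥(J ^ (s - i))) :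
    I.gradedTensorToQuot k J r s (DirectSum.of _ i
        (Submodule.Quotient.mk x ⊗ₜ Submodule.Quotient.mk y)) =
      Submodule.Quotient.mk ⟨(x : R) ⊗ₜ[k] (y : S),
        Ideal.tmul_mem_tensorFiltration (Nat.lt_succ_iff.mp i.2) x.2 y.2⟩ := by
  let _ := fun i : Fin (s + 1) =>
    mixedModule k S (I.GradedPiece (r + i)) (J.GradedPiece (s - i)) R
  rw [← DirectSum.lof_eq_of (R ⊗[k] S)]
  exact DirectSum.toModule_lof _ _ _

theorem Ideal.gradedTensorToQuot_surjective :
    Function.Surjective (I.gradedTensorToQuot k J r s) := by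
  let _ := fun i : Fin (s + 1) =>
    mixedModule k S (I.GradedPiece (r + i)) (J.GradedPiece (s - i)) R
  let K := I.tensorFiltration k J r s
  let G : Ideal (R ⊗[k] S) :=
    ((LinearMap.range (I.gradedTensorToQuot k J r s)).comap (Submodule.mkQ _)).map K.subtype
  have hKG : K.restrictScalars k ≤ G.restrictScalars k :=
    Ideal.tensorFiltration_le fun i hi x hx y hy =>
      ⟨_, ⟨DirectSum.of _ ⟨i, Nat.lt_succ_of_le hi⟩
        (Submodule.Quotient.mk ⟨x, hx⟩ ⊗ₜ Submodule.Quotient.mk ⟨y, hy⟩),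
        Ideal.gradedTensorToQuot_of_mk_tmul_mk _ _ _⟩, rfl⟩
  intro z
  obtain ⟨v, rfl⟩ := Submodule.Quotient.mk_surjective _ z
  obtain ⟨w, hw, hwv⟩ := hKG v.2
  rwa [← Subtype.ext hwv]

end TensorFiltration

section GradedTensorProj

variable {k : Type*} {R S : Type*} [Field k] [CommRing R] [CommRing S] [Algebra k R]
  [Algebra k S] {I : Ideal R} {J : Ideal S} {r s : ℕ}

theorem Ideal.map_gradedProj_tmul_eq_zero {a b a' b' : ℕ} (h : a < a' ∨ b < b') {x : R}
    (hx : x ∈ I ^ a') {y : S} (hy : y ∈ J ^ b') :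
    TensorProduct.map (I.gradedProj k a) (J.gradedProj k b) (x ⊗ₜ y) = 0 := by
  rw [TensorProduct.map_tmul]
  rcases h with h | h
  · rw [Ideal.gradedProj_eq_zero h hx, TensorProduct.zero_tmul]
  · rw [Ideal.gradedProj_eq_zero h hy, TensorProduct.tmul_zero]

theorem Ideal.tensorFiltration_succ_le_ker_map_gradedProj (i : Fin (s + 1)) :
    (I.tensorFiltration k J r (s + 1)).restrictScalars k ≤
      LinearMap.ker (TensorProduct.map (I.gradedProj k (r + i)) (J.gradedProj k (s - i))) :=
  Ideal.tensorFiltration_le fun j _ _ hx _ hy => Ideal.map_gradedProj_tmul_eq_zero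
    (by rcases lt_or_ge (i : ℕ) j with h | h <;> [left; right] <;> omega) hx hy

variable (k I J r s) in
/-- The `i`-th component of the inverse isomorphism. -/
noncomputable def Ideal.tensorFiltrationQuotProj (i : Fin (s + 1)) :
    I.tensorFiltrationQuot k J r s →ₗ[k] I.GradedPiece (r + i) ⊗[k] J.GradedPiece (s - i) :=
  ((Submodule.comap (I.tensorFiltration k J r s).subtype
      (I.tensorFiltration k J r (s + 1))).restrictScalars k).liftQ
    (TensorProduct.map (I.gradedProj k (r + i)) (J.gradedProj k (s - i)) ∘ₗ
      (I.tensorFiltration k J r s).subtype.restrictScalars k)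
    (fun _ hz => Ideal.tensorFiltration_succ_le_ker_map_gradedProj i hz) ∘ₗ
  (Submodule.Quotient.restrictScalarsEquiv k _).symm.toLinearMap

theorem Ideal.tensorFiltrationQuotProj_mk (i : Fin (s + 1))
    (v : ↥(I.tensorFiltration k J r s)) :
    I.tensorFiltrationQuotProj k J r s i (Submodule.Quotient.mk v) =
      TensorProduct.map (I.gradedProj k (r + i)) (J.gradedProj k (s - i)) v := rfl

theorem Ideal.tensorFiltrationQuotProj_gradedTensorToQuot (d : I.GradedTensor k J r s)
    (i : Fin (s + 1)) :
    I.tensorFiltrationQuotProj k J r s i (I.gradedTensorToQuot k J r s d) = d i := by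
  induction d using DirectSum.induction_on with
  | zero => rw [map_zero, map_zero, DirectSum.zero_apply]
  | add d d' hd hd' => rw [map_add, map_add, hd, hd', DirectSum.add_apply]
  | of j z =>
    induction z using TensorProduct.induction_on with
    | zero => rw [map_zero, map_zero, map_zero, DirectSum.zero_apply]
    | add z z' hz hz' => simp only [map_add, DirectSum.add_apply, hz, hz']
    | tmul m n =>
      obtain ⟨x, rfl⟩ := Submodule.Quotient.mk_surjective _ m
      obtain ⟨y, rfl⟩ := Submodule.Quotient.mk_surjective _ n
      rw [Ideal.gradedTensorToQuot_of_mk_tmul_mk, Ideal.tensorFiltrationQuotProj_mk]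
      obtain rfl | hij := eq_or_ne i j
      · rw [DirectSum.of_eq_same, TensorProduct.map_tmul, Ideal.gradedProj_coe,
          Ideal.gradedProj_coe]
      · rw [DirectSum.of_eq_of_ne _ _ _ hij]
        refine Ideal.map_gradedProj_tmul_eq_zero ?_ x.2 y.2
        have hj := j.2
        rcases lt_or_gt_of_ne (Fin.val_ne_of_ne hij) with h | h <;> [left; right] <;> omega

theorem Ideal.gradedTensorToQuot_injective :
    Function.Injective (I.gradedTensorToQuot k J r s) := fun d d' h =>
  DirectSum.ext fun i => by
    rw [← Ideal.tensorFiltrationQuotProj_gradedTensorToQuot d i, h,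
      Ideal.tensorFiltrationQuotProj_gradedTensorToQuot]

end GradedTensorProj

/-- With `T = R ⊗[k] S`, `P = I + J` (extensions of `I ⊆ R`, `J ⊆ S`), for all `r s : ℕ`,
`I^r P^s / I^r P^(s+1) ≅ ⨁_{i=0}^{s} (I^(r+i)/I^(r+i+1)) ⊗[k] (J^(s-i)/J^(s-i+1))`
as `T`-modules. -/
theorem quotient_power_decomposition {k R S : Type*} [Field k] [CommRing R] [CommRing S]
    [Algebra k R] [Algebra k S] (I : Ideal R) (J : Ideal S)
    (I' J' P : Ideal (R ⊗[k] S))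
    (hI' : I' = I.map (algebraMap R (R ⊗[k] S)))
    (hJ' : J' = J.map ((Algebra.TensorProduct.includeRight : S →ₐ[k] R ⊗[k] S) : S →+* R ⊗[k] S))
    (hP : P = I' + J') (r s : ℕ) :
    letI : ∀ i : Fin (s + 1),
        Module (R ⊗[k] S)
          ((↥(I ^ (r + (i : ℕ))) ⧸
              Submodule.comap ((I ^ (r + (i : ℕ))).subtype) (I ^ (r + (i : ℕ) + 1)))
            ⊗[k]
           (↥(J ^ (s - (i : ℕ))) ⧸
              Submodule.comap ((J ^ (s - (i : ℕ))).subtype) (J ^ (s - (i : ℕ) + 1)))) :=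
      fun _ => mixedModule k S _ _ R
    Nonempty (
      ((↥(I' ^ r * P ^ s)) ⧸
          Submodule.comap ((I' ^ r * P ^ s).subtype) (I' ^ r * P ^ (s + 1)))
        ≃ₗ[R ⊗[k] S]
      (⨁ i : Fin (s + 1),
        ((↥(I ^ (r + (i : ℕ))) ⧸
            Submodule.comap ((I ^ (r + (i : ℕ))).subtype) (I ^ (r + (i : ℕ) + 1)))
          ⊗[k]
         (↥(J ^ (s - (i : ℕ))) ⧸
            Submodule.comap ((J ^ (s - (i : ℕ))).subtype) (J ^ (s - (i : ℕ) + 1)))))) := by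
  subst hI' hJ' hP
  exact ⟨(LinearEquiv.ofBijective (I.gradedTensorToQuot k J r s)
    ⟨Ideal.gradedTensorToQuot_injective, Ideal.gradedTensorToQuot_surjective⟩).symm⟩
end

section
/- Let $R = k[x_1,\dots,x_m]$ and let $I_1, I_2$ be monomial ideals of $R$. Then $\partial^*(I_1 I_2) = \partial^*(I_1) I_2 + I_1 \partial^*(I_2)$, where $\partial^*(L)$ denotes the ideal generated by all $f/x_i$ with $f$ a minimal monomial generator of $L$ and $x_i$ a variable dividing $f$. -/
/-! Every minimal generator of `I₁ I₂` is a sum `e₁ + e₂` of minimal generators of `I₁` and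
`I₂`, so each generator `x^(e₁ + e₂) / xᵢ` of `∂*(I₁ I₂)` is `(x^e₁ / xᵢ) x^e₂` or
`x^e₁ (x^e₂ / xᵢ)`. Conversely, if `xᵢ x^g` lies in a proper ideal `I`, then a minimal generator
`x^e` of `I` dividing `xᵢ x^g` either divides `x^g` and is not `1`, or is divisible by `xᵢ` with
`x^e / xᵢ` dividing `x^g`; either way `x^g ∈ ∂*(I)`. Taking `x^g = (x^e₁ / xᵢ) x^s` with
`x^s ∈ I₂` gives `∂*(I₁) I₂ ⊆ ∂*(I₁ I₂)`. -/

open MvPolynomial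

variable {m : ℕ} {k : Type*}

/-- An ideal of `k[x_1, …, x_m]` is a monomial ideal if it is generated by monomials. -/
def IsMonomialIdeal [Field k] (I : Ideal (MvPolynomial (Fin m) k)) : Prop :=
  ∃ S : Set (Fin m →₀ ℕ), I = Ideal.span ((fun e => monomial e (1 : k)) '' S)

/-- `e` is the exponent vector of a minimal monomial generator of `I`: the monomial `x^e`
lies in `I` and no proper divisor of it lies in `I`. -/
def IsMinMonomialGen [Field k] (I : Ideal (MvPolynomial (Fin m) k)) (e : Fin m →₀ ℕ) : Prop :=
  monomial e (1 : k) ∈ I ∧ ∀ e' : Fin m →₀ ℕ, e' ≤ e → e' ≠ e → monomial e' (1 : k) ∉ I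

/-- `∂*(I)`: the ideal generated by all quotients `f / x_i`, where `f` runs over the minimal
monomial generators of `I` and `x_i` over the variables dividing `f`. -/
noncomputable def partialStar [Field k] (I : Ideal (MvPolynomial (Fin m) k)) :
    Ideal (MvPolynomial (Fin m) k) :=
  Ideal.span { p | ∃ (e : Fin m →₀ ℕ) (i : Fin m), IsMinMonomialGen I e ∧ e i ≠ 0 ∧
    p = monomial (e - Finsupp.single i 1) (1 : k) }

namespace MvPolynomial

open scoped Pointwise

variable {σ R : Type*} [CommSemiring R]

theorem monomial_one_mem_of_le {I : Ideal (MvPolynomial σ R)} {d e : σ →₀ ℕ} (hde : d ≤ e)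
    (hd : monomial d (1 : R) ∈ I) : monomial e (1 : R) ∈ I :=
  Ideal.mem_of_dvd _ (monomial_dvd_monomial.2 ⟨Or.inr hde, one_dvd _⟩) hd

theorem monomial_one_image_mul_image (S T : Set (σ →₀ ℕ)) :
    (fun e => monomial e (1 : R)) '' S * (fun e => monomial e (1 : R)) '' T =
      (fun e => monomial e (1 : R)) '' (S + T) := by
  rw [← Set.image2_mul, ← Set.image2_add, Set.image_image2, Set.image2_image_left,
    Set.image2_image_right]
  simp only [monomial_mul, mul_one]

theorem monomial_one_add_mem_mul {I J : Ideal (MvPolynomial σ R)} {d e : σ →₀ ℕ}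
    (hd : monomial d (1 : R) ∈ I) (he : monomial e (1 : R) ∈ J) :
    monomial (d + e) (1 : R) ∈ I * J := by
  simpa only [monomial_mul, mul_one] using Ideal.mul_mem_mul hd he

end MvPolynomial

section MonomialIdeal

variable [Field k] {I I₁ I₂ : Ideal (MvPolynomial (Fin m) k)}

theorem isMinMonomialGen_iff_minimal {e : Fin m →₀ ℕ} :
    IsMinMonomialGen I e ↔ Minimal (fun d => monomial d (1 : k) ∈ I) e := by
  simp only [IsMinMonomialGen, minimal_iff_forall_lt, lt_iff_le_and_ne]
  exact and_congr_right fun _ => ⟨fun h d hd => h d hd.1 hd.2, fun h d hle hne => h ⟨hle, hne⟩⟩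

theorem exists_isMinMonomialGen_le {e : Fin m →₀ ℕ} (he : monomial e (1 : k) ∈ I) :
    ∃ d ≤ e, IsMinMonomialGen I d := by
  simpa only [isMinMonomialGen_iff_minimal] using exists_minimal_le_of_wellFoundedLT _ e he

theorem monomial_mem_partialStar_of_le {e t : Fin m →₀ ℕ} {i : Fin m}
    (he : IsMinMonomialGen I e) (hi : e i ≠ 0) (hle : e - Finsupp.single i 1 ≤ t) :
    monomial t (1 : k) ∈ partialStar I :=
  monomial_one_mem_of_le hle (Ideal.subset_span ⟨e, i, he, hi, rfl⟩)

theorem monomial_mem_partialStar_of_add_single {g : Fin m →₀ ℕ} {i : Fin m}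
    (hg : monomial (g + Finsupp.single i 1) (1 : k) ∈ I) (hI : monomial 0 (1 : k) ∉ I) :
    monomial g (1 : k) ∈ partialStar I := by
  obtain ⟨e, hle, he⟩ := exists_isMinMonomialGen_le hg
  by_cases hei : e i = 0
  · have heg : e ≤ g := fun j => by
      have := hle j
      rcases eq_or_ne i j with rfl | hij <;> simp_all
    obtain ⟨j, hj⟩ : ∃ j, e j ≠ 0 := by
      by_contra! h
      have he0 : e = 0 := Finsupp.ext fun j => by simpa using h j
      exact hI (he0 ▸ he.1)
    exact monomial_mem_partialStar_of_le he hj (tsub_le_self.trans heg)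
  · exact monomial_mem_partialStar_of_le he hei (tsub_le_iff_right.2 hle)

theorem IsMonomialIdeal.exists_add_le_of_monomial_mem_mul (h₁ : IsMonomialIdeal I₁)
    (h₂ : IsMonomialIdeal I₂) {e : Fin m →₀ ℕ} (he : monomial e (1 : k) ∈ I₁ * I₂) :
    ∃ e₁ e₂, monomial e₁ (1 : k) ∈ I₁ ∧ monomial e₂ (1 : k) ∈ I₂ ∧ e₁ + e₂ ≤ e := by
  obtain ⟨S₁, rfl⟩ := h₁
  obtain ⟨S₂, rfl⟩ := h₂
  rw [Ideal.span_mul_span', monomial_one_image_mul_image, mem_ideal_span_monomial_image] at he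
  obtain ⟨_, ⟨e₁, he₁, e₂, he₂, rfl⟩, hle⟩ := he e (by simp)
  exact ⟨e₁, e₂, Ideal.subset_span ⟨e₁, he₁, rfl⟩, Ideal.subset_span ⟨e₂, he₂, rfl⟩, hle⟩

theorem IsMinMonomialGen.exists_add_of_mul (h₁ : IsMonomialIdeal I₁) (h₂ : IsMonomialIdeal I₂)
    {e : Fin m →₀ ℕ} (he : IsMinMonomialGen (I₁ * I₂) e) :
    ∃ e₁ e₂, IsMinMonomialGen I₁ e₁ ∧ IsMinMonomialGen I₂ e₂ ∧ e = e₁ + e₂ := by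
  obtain ⟨f₁, f₂, hf₁, hf₂, hf⟩ := h₁.exists_add_le_of_monomial_mem_mul h₂ he.1
  obtain ⟨e₁, hle₁, he₁⟩ := exists_isMinMonomialGen_le hf₁
  obtain ⟨e₂, hle₂, he₂⟩ := exists_isMinMonomialGen_le hf₂
  refine ⟨e₁, e₂, he₁, he₂, ?_⟩
  by_contra hne
  exact he.2 _ ((add_le_add hle₁ hle₂).trans hf) (Ne.symm hne)
    (monomial_one_add_mem_mul he₁.1 he₂.1)

theorem monomial_add_sub_single_mem_partialStar_mul {e₁ e₂ : Fin m →₀ ℕ} {i : Fin m}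
    (he₁ : IsMinMonomialGen I₁ e₁) (hi : e₁ i ≠ 0) (he₂ : monomial e₂ (1 : k) ∈ I₂) :
    monomial (e₁ + e₂ - Finsupp.single i 1) (1 : k) ∈ partialStar I₁ * I₂ := by
  rw [← tsub_add_eq_add_tsub (Finsupp.single_le_iff.2 (Nat.one_le_iff_ne_zero.2 hi))]
  exact monomial_one_add_mem_mul (Ideal.subset_span ⟨e₁, i, he₁, hi, rfl⟩) he₂

theorem monomial_sub_single_add_mem_partialStar_mul {e₁ e₂ : Fin m →₀ ℕ} {i : Fin m}
    (he₁ : IsMinMonomialGen I₁ e₁) (hi : e₁ i ≠ 0) (he₂ : monomial e₂ (1 : k) ∈ I₂) :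
    monomial (e₁ - Finsupp.single i 1 + e₂) (1 : k) ∈ partialStar (I₁ * I₂) := by
  refine monomial_mem_partialStar_of_add_single (i := i) ?_ fun h₀ => ?_
  · rw [add_right_comm, tsub_add_cancel_of_le (Finsupp.single_le_iff.2
      (Nat.one_le_iff_ne_zero.2 hi))]
    exact monomial_one_add_mem_mul he₁.1 he₂
  · exact he₁.2 0 zero_le (fun h => hi (by rw [← h]; rfl)) (Ideal.mul_le_left h₀)

theorem partialStar_mul_le (h₂ : IsMonomialIdeal I₂) :
    partialStar I₁ * I₂ ≤ partialStar (I₁ * I₂) := by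
  obtain ⟨S₂, rfl⟩ := h₂
  rw [partialStar, Ideal.span_mul_span', Ideal.span_le]
  rintro _ ⟨_, ⟨e₁, i, he₁, hi, rfl⟩, _, ⟨e₂, he₂, rfl⟩, rfl⟩
  simp only [monomial_mul, mul_one]
  exact monomial_sub_single_add_mem_partialStar_mul he₁ hi (Ideal.subset_span ⟨e₂, he₂, rfl⟩)

end MonomialIdeal

/-- For monomial ideals `I₁, I₂` of `k[x_1, …, x_m]`,
`∂*(I₁ I₂) = ∂*(I₁) I₂ + I₁ ∂*(I₂)`. -/
theorem partialStar_mul [Field k] (I₁ I₂ : Ideal (MvPolynomial (Fin m) k))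
    (h₁ : IsMonomialIdeal I₁) (h₂ : IsMonomialIdeal I₂) :
    partialStar (I₁ * I₂) = partialStar I₁ * I₂ + I₁ * partialStar I₂ := by
  refine le_antisymm ?_ (sup_le (partialStar_mul_le h₂) ?_)
  · rw [partialStar, Ideal.span_le]
    rintro _ ⟨e, i, he, hi, rfl⟩
    obtain ⟨e₁, e₂, he₁, he₂, rfl⟩ := he.exists_add_of_mul h₁ h₂
    by_cases hi₁ : e₁ i = 0
    · have hi₂ : e₂ i ≠ 0 := by simpa [hi₁] using hi
      apply Ideal.mem_sup_right
      rw [add_comm e₁, mul_comm]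
      exact monomial_add_sub_single_mem_partialStar_mul he₂ hi₂ he₁.1
    · exact Ideal.mem_sup_left (monomial_add_sub_single_mem_partialStar_mul he₁ hi₁ he₂.1)
  · rw [mul_comm, mul_comm I₁]
    exact partialStar_mul_le h₁
end

section
/- Let $(R,\mathfrak{m})$ be a Noetherian local ring and $I = (f_1,\dots,f_p)$ with $f_1,\dots,f_p$ a regular sequence in $\mathfrak{m}$, $p \ge 2$. Set $f = f_1$ and $K = (f_2,\dots,f_p)$. Then for every $r \ge 1$, $f I^{r-1} \cap K^r = f K^r$. -/
/-! Everything reduces to `f` being a nonzerodivisor modulo `K ^ r`. Since any reordering of a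
regular sequence in a Noetherian local ring is regular, this follows from the stronger claim
that `f` is regular modulo `L ^ r + H` whenever `H`, the generators `g, gs` of `L` and `f`
form a regular sequence in every order. Write `L = (g) + K'`, `K' = (gs)`, and let
`f y ∈ L ^ (n+1) + H`. As `L ^ (n+1) ⊆ g L ^ n + K' ^ (n+1)`, the claim for `K'` with `H + (g)`
gives `y = u + w g` with `u ∈ K' ^ (n+1) + H`. Then `g (f w) ∈ g L ^ n + K' ^ (n+1) + H`, so the
claim for `K'` with `g` in place of `f` gives `f w ∈ L ^ n + H`; induction on `n` gives
`w ∈ L ^ n + H`, and `y ∈ L ^ (n+1) + H` follows. -/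

open RingTheory.Sequence IsLocalRing

namespace Ideal

variable {R : Type*} [CommRing R]

theorem sup_pow_succ_le (A B : Ideal R) (n : ℕ) :
    (A ⊔ B) ^ (n + 1) ≤ A * (A ⊔ B) ^ n ⊔ B ^ (n + 1) := by
  induction n with
  | zero => simp
  | succ n ih =>
    calc (A ⊔ B) ^ (n + 2) = A * (A ⊔ B) ^ (n + 1) ⊔ B * (A ⊔ B) ^ (n + 1) := by
          rw [pow_succ' _ (n + 1), sup_mul]
      _ ≤ A * (A ⊔ B) ^ (n + 1) ⊔ B * (A * (A ⊔ B) ^ n ⊔ B ^ (n + 1)) :=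
          sup_le_sup_left (mul_mono_right ih) _
      _ = A * (A ⊔ B) ^ (n + 1) ⊔ (A * (B * (A ⊔ B) ^ n) ⊔ B ^ (n + 2)) := by
          rw [mul_sup, mul_left_comm, ← pow_succ']
      _ ≤ A * (A ⊔ B) ^ (n + 1) ⊔ B ^ (n + 2) := by
          refine sup_le le_sup_left (sup_le_sup_right ?_ _)
          rw [pow_succ' _ n]
          exact mul_mono_right (mul_mono_left le_sup_right)

theorem isSMulRegular_quotient_sup_pow_succ_sup {f g : R} {K' H : Ideal R} {n : ℕ}
    (hf : IsSMulRegular (R ⧸ (K' ^ (n + 1) ⊔ (H ⊔ span {g}))) f)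
    (hg : IsSMulRegular (R ⧸ (K' ^ (n + 1) ⊔ H)) g)
    (hfn : IsSMulRegular (R ⧸ ((span {g} ⊔ K') ^ n ⊔ H)) f) :
    IsSMulRegular (R ⧸ ((span {g} ⊔ K') ^ (n + 1) ⊔ H)) f := by
  simp only [isSMulRegular_quotient_iff_mem_of_smul_mem, smul_eq_mul] at *
  set L := span {g} ⊔ K'
  have hpow : L ^ (n + 1) ≤ span {g} * L ^ n ⊔ K' ^ (n + 1) := sup_pow_succ_le _ _ n
  have hKL : K' ^ (n + 1) ⊔ H ≤ L ^ (n + 1) ⊔ H :=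
    sup_le_sup_right (pow_right_mono le_sup_right _) H
  intro y hy
  have hy' : y ∈ K' ^ (n + 1) ⊔ H ⊔ span {g} := by
    have hle : L ^ (n + 1) ⊔ H ≤ K' ^ (n + 1) ⊔ H ⊔ span {g} := by
      refine sup_le (hpow.trans (sup_le (mul_le_left.trans le_sup_right) ?_)) ?_
      · exact le_sup_left.trans le_sup_left
      · exact le_sup_right.trans le_sup_left
    rw [sup_assoc] at hle ⊢
    exact hf y (hle hy)
  obtain ⟨u, hu, _, hw, rfl⟩ := Submodule.mem_sup.mp hy'
  obtain ⟨w, rfl⟩ := mem_span_singleton'.mp hw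
  have hgfw : g * (f * w) ∈ span {g} * L ^ n ⊔ (K' ^ (n + 1) ⊔ H) := by
    have hsub : g * (f * w) = f * (u + w * g) - f * u := by ring
    rw [← sup_assoc, hsub]
    exact sup_le_sup_right hpow H (sub_mem hy (mul_mem_left _ f (hKL hu)))
  obtain ⟨_, hgc, d, hd, hcd⟩ := Submodule.mem_sup.mp hgfw
  obtain ⟨c, hc, rfl⟩ := mem_span_singleton_mul.mp hgc
  have hfwc : f * w - c ∈ K' ^ (n + 1) ⊔ H :=
    hg _ (by rwa [mul_sub, ← hcd, add_sub_cancel_left])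
  have hw : w ∈ L ^ n ⊔ H := by
    have hKL' : K' ^ (n + 1) ⊔ H ≤ L ^ n ⊔ H :=
      sup_le_sup_right ((pow_right_mono le_sup_right _).trans (pow_le_pow_right n.le_succ)) H
    refine hfn w ?_
    rw [← add_sub_cancel c (f * w)]
    exact add_mem (mem_sup_left hc) (hKL' hfwc)
  have hwg : (L ^ n ⊔ H) * L ≤ L ^ (n + 1) ⊔ H := by
    rw [sup_mul, ← pow_succ]
    exact sup_le_sup_left mul_le_left _
  exact add_mem (hKL hu) (hwg (mul_mem_mul hw (mem_sup_left (mem_span_singleton_self g))))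

theorem isSMulRegular_quotient_ofList_of_isWeaklyRegular_append {hs : List R} {f : R}
    (h : IsWeaklyRegular R (hs ++ [f])) : IsSMulRegular (R ⧸ ofList hs) f := by
  rw [isWeaklyRegular_append_iff, isWeaklyRegular_singleton_iff] at h
  have hf := h.2
  rwa [smul_eq_mul, mul_top] at hf

theorem isSMulRegular_quotient_ofList_pow_sup {f : R} (gs : List R) {hs : List R}
    (h : ∀ l : List R, l.Perm (hs ++ gs ++ [f]) → IsWeaklyRegular R l) (r : ℕ) :
    IsSMulRegular (R ⧸ (ofList gs ^ r ⊔ ofList hs)) f := by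
  induction gs generalizing hs f r with
  | nil =>
    rcases r with _ | r
    · simp [isSMulRegular_quotient_iff_mem_of_smul_mem]
    · rw [ofList_nil, ← zero_eq_bot, zero_pow r.succ_ne_zero, zero_eq_bot, bot_sup_eq]
      exact isSMulRegular_quotient_ofList_of_isWeaklyRegular_append (h _ (by simp))
  | cons g gs ih =>
    have hf : ∀ r, IsSMulRegular (R ⧸ (ofList gs ^ r ⊔ (ofList hs ⊔ span {g}))) f := by
      intro r
      have hf := ih (hs := hs ++ [g]) (r := r) (fun l hl => h l (by simpa using hl))
      rwa [ofList_append, ofList_singleton] at hf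
    have hg : ∀ r, IsSMulRegular (R ⧸ (ofList gs ^ r ⊔ ofList hs)) g := by
      refine fun r => ih (r := r) fun l hl => ((isWeaklyRegular_append_iff R l [f]).mp (h _ ?_)).1
      refine (hl.append_right [f]).trans ?_
      simp only [List.append_assoc, List.cons_append]
      exact List.Perm.append_left hs (List.perm_middle.trans (by simp))
    rw [ofList_cons]
    induction r with
    | zero => simp [isSMulRegular_quotient_iff_mem_of_smul_mem]
    | succ n ihr => exact isSMulRegular_quotient_sup_pow_succ_sup (hf _) (hg _) ihr

theorem span_singleton_mul_inf_eq_of_isSMulRegular {f : R} {I J : Ideal R} (hJI : J ≤ I)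
    (hf : IsSMulRegular (R ⧸ J) f) : span {f} * I ⊓ J = span {f} * J := by
  refine le_antisymm ?_ (le_inf (mul_mono_right hJI) mul_le_right)
  rintro _ ⟨hx, hxJ⟩
  obtain ⟨y, -, rfl⟩ := mem_span_singleton_mul.mp hx
  exact mul_mem_mul (mem_span_singleton_self f)
    ((isSMulRegular_quotient_iff_mem_of_smul_mem _ _).mp hf y hxJ)

end Ideal

theorem IsLocalRing.isSMulRegular_quotient_ofList_pow {R : Type*} [CommRing R]
    [IsNoetherianRing R] [IsLocalRing R] {f : R} {gs : List R} (hreg : IsRegular R (f :: gs))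
    (r : ℕ) : IsSMulRegular (R ⧸ Ideal.ofList gs ^ r) f := by
  have hf := Ideal.isSMulRegular_quotient_ofList_pow_sup gs (hs := []) (fun l hl =>
    (isRegular_of_perm hreg ((hl.trans (List.perm_append_singleton f gs)).symm)).1) r
  rwa [Ideal.ofList_nil, sup_bot_eq] at hf

/-- Let `(R, 𝔪)` be a Noetherian local ring and `I = (f_1, …, f_p)` with `f_1, …, f_p` a
regular sequence in `𝔪`, `p ≥ 2`.  With `f = f_1` and `K = (f_2, …, f_p)`, for every `r ≥ 1`
one has `f I^(r-1) ∩ K^r = f K^r`. -/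
theorem regular_sequence_inter {R : Type*} [CommRing R] [IsNoetherianRing R] [IsLocalRing R]
    {p : ℕ} (hp : 2 ≤ p) (f : Fin p → R)
    (hreg : RingTheory.Sequence.IsRegular R (List.ofFn f)) (r : ℕ) :
    Ideal.span {f ⟨0, by omega⟩} * (Ideal.span (Set.range f)) ^ (r - 1)
        ⊓ (Ideal.span (f '' {i : Fin p | (i : ℕ) ≠ 0})) ^ r
      = Ideal.span {f ⟨0, by omega⟩} * (Ideal.span (f '' {i : Fin p | (i : ℕ) ≠ 0})) ^ r := by
  obtain ⟨p, rfl⟩ : ∃ q, p = q + 1 := ⟨p - 1, by omega⟩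
  have hK : Ideal.span (f '' {i | (i : ℕ) ≠ 0}) =
      Ideal.ofList (List.ofFn fun i : Fin p => f i.succ) := by
    refine congrArg Ideal.span (Set.ext fun x => ?_)
    simp [Fin.exists_fin_succ, List.mem_ofFn]
  rw [hK]
  refine Ideal.span_singleton_mul_inf_eq_of_isSMulRegular ?_
    (isSMulRegular_quotient_ofList_pow (by rwa [List.ofFn_succ] at hreg) r)
  calc Ideal.ofList _ ^ r ≤ Ideal.span (Set.range f) ^ r :=
        Ideal.pow_right_mono (Ideal.span_mono fun _ hx =>
          Set.range_comp_subset_range _ _ (List.mem_ofFn.mp hx)) r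
    _ ≤ Ideal.span (Set.range f) ^ (r - 1) := Ideal.pow_le_pow_right (r.sub_le 1)
end
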